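/- arXiv:2005.05584 — 2 statements merged into one kernel-verified Lean document; each statement's English description precedes it below -/
import Mathlib

section
/- Let μ, μ_Y, μ_Z be measures on a measurable abelian group E with μ = (μ_Y * μ_Z) ∘ f⁻¹ for a measurable map f : E → E, where * denotes convolution. Let Y₁, Y₂ ∼ μ_Y and Z ∼ μ_Z be independent random variables, and define X₁ = f(Y₁ + Z), X₂ = f(Y₂ + Z). Then the joint law of (X₁, X₂) is symmetric: ℙ(X₁ ∈ A, X₂ ∈ B) = ℙ(X₁ ∈ B, X₂ ∈ A) for all measurable A, B. Consequently, any regular conditional distribution Q(x, ·) of X₂ given X₁ = x is μ-reversible. -/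
open MeasureTheory

/-- Convolution-type construction of reversible kernels: if `μ = (μY ∗ μZ) ∘ f⁻¹`,
`Y₁, Y₂ ∼ μY`, `Z ∼ μZ` independent, `X₁ = f (Y₁ + Z)`, `X₂ = f (Y₂ + Z)`, then the
joint law of `(X₁, X₂)` is symmetric, and any regular conditional distribution `Q` of
`X₂` given `X₁` is `μ`-reversible. -/
theorem stmt1 {E : Type*} [MeasurableSpace E] [AddCommGroup E] [MeasurableAdd₂ E]
    (μY μZ : Measure E) [IsProbabilityMeasure μY] [IsProbabilityMeasure μZ]
    (f : E → E) (hf : Measurable f)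
    (μ : Measure E) (hμ : μ = (μY ∗ μZ).map f)
    (P : Measure (E × E × E)) (hP : P = μY.prod (μY.prod μZ))
    (X₁ X₂ : E × E × E → E)
    (hX₁ : X₁ = fun ω => f (ω.1 + ω.2.2))
    (hX₂ : X₂ = fun ω => f (ω.2.1 + ω.2.2))
    (Q : E → Measure E)
    (hQ : ∀ A B : Set E, MeasurableSet A → MeasurableSet B →
      P {ω | X₁ ω ∈ A ∧ X₂ ω ∈ B} = ∫⁻ x in A, Q x B ∂μ) :
    (∀ A B : Set E, MeasurableSet A → MeasurableSet B →
      P {ω | X₁ ω ∈ A ∧ X₂ ω ∈ B} = P {ω | X₁ ω ∈ B ∧ X₂ ω ∈ A}) ∧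
    (∀ A B : Set E, MeasurableSet A → MeasurableSet B →
      ∫⁻ x in A, Q x B ∂μ = ∫⁻ x in B, Q x A ∂μ) := by
  have hsym : ∀ A B : Set E, MeasurableSet A → MeasurableSet B →
      P {ω | X₁ ω ∈ A ∧ X₂ ω ∈ B} = P {ω | X₁ ω ∈ B ∧ X₂ ω ∈ A} := by
    intro A B hA hB
    have hswap : MeasurePreserving (Prod.swap : E × E → E × E)
        (μY.prod μY) (μY.prod μY) := Measure.measurePreserving_swap
    have hT : MeasurePreserving
        (fun ω : E × E × E => (ω.2.1, ω.1, ω.2.2)) P P := by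
      rw [hP]
      have h1 := (MeasureTheory.measurePreserving_prodAssoc
        (μa := μY) (μb := μY) (μc := μZ)).symm MeasurableEquiv.prodAssoc
      have h2 := hswap.prod (MeasurePreserving.id μZ)
      have h3 := MeasureTheory.measurePreserving_prodAssoc
        (μa := μY) (μb := μY) (μc := μZ)
      have := (h3.comp h2).comp h1
      exact this
    have hmeas : ∀ C D : Set E, MeasurableSet C → MeasurableSet D →
        MeasurableSet {ω : E × E × E | X₁ ω ∈ C ∧ X₂ ω ∈ D} := by
      intro C D hC hD
      rw [hX₁, hX₂]
      exact ((hf.comp (measurable_fst.add (measurable_snd.comp measurable_snd)))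
        hC).inter
        ((hf.comp ((measurable_fst.comp measurable_snd).add
          (measurable_snd.comp measurable_snd))) hD)
    have key := hT.measure_preimage
      ((hmeas A B hA hB).nullMeasurableSet)
    have hpre : (fun ω : E × E × E => (ω.2.1, ω.1, ω.2.2)) ⁻¹'
        {ω | X₁ ω ∈ A ∧ X₂ ω ∈ B} = {ω | X₁ ω ∈ B ∧ X₂ ω ∈ A} := by
      ext ω
      simp only [hX₁, hX₂, Set.mem_preimage, Set.mem_setOf_eq]
      tauto
    rw [hpre] at key
    exact key.symm
  refine ⟨hsym, fun A B hA hB => ?_⟩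
  rw [← hQ A B hA hB, ← hQ B A hB hA]
  exact hsym A B hA hB
end

section
/- Let k > 0 and ρ ∈ (0,1). Define the Beta-Gamma kernel Q(x, ·) on ℝ₊ as the law of y = b·x + c where b ∼ Beta(kρ, k(1−ρ)) and c ∼ Gamma(k(1−ρ), 1) are independent. Then Q is reversible with respect to the Gamma distribution Gamma(k, 1). -/
open MeasureTheory ProbabilityTheory

/-- The Beta distribution with shape parameters `a`, `b`, as a measure on `ℝ`
with density `x^(a-1) (1-x)^(b-1) / B(a,b)` on `(0,1)`. -/
noncomputable def betaMeasure' (a b : ℝ) : Measure ℝ :=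
  volume.withDensity fun x =>
    ENNReal.ofReal
      ((Set.Ioo (0 : ℝ) 1).indicator
        (fun x => x ^ (a - 1) * (1 - x) ^ (b - 1) /
          (Real.Gamma a * Real.Gamma b / Real.Gamma (a + b))) x)

/-!
With `a = kρ` and `b = k(1 - ρ)`, the pair `(x, y)` under `μ(dx) Q(x, dy)` has density
`γ_{a+b}(x) ∫ β_{a,b}(t) γ_b(y - t x) dt`. Substituting `u = t x` and using the beta–gamma algebra,
this is `∫ γ_a(u) γ_b(x - u) γ_b(y - u) du`, the density of `(U + V, U + W)` for independent
`U ∼ Γ(a)`, `V, W ∼ Γ(b)`. It is symmetric in `x` and `y`, and detailed balance of the densities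
gives reversibility.
-/

open Real Set
open scoped ENNReal

theorem setLIntegral_withDensity_eq_of_detailed_balance {α : Type*} [MeasurableSpace α]
    {ν : Measure α} [SFinite ν] {p : α → ℝ≥0∞} {q : α → α → ℝ≥0∞}
    (hp : Measurable p) (hq : Measurable (Function.uncurry q))
    (hbal : ∀ᵐ x ∂ν, ∀ᵐ y ∂ν, p x * q x y = p y * q y x)
    {A B : Set α} (hA : MeasurableSet A) (hB : MeasurableSet B) :
    ∫⁻ x in A, ν.withDensity (q x) B ∂(ν.withDensity p) =
      ∫⁻ x in B, ν.withDensity (q x) A ∂(ν.withDensity p) := by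
  have hflow : ∀ {S T : Set α}, MeasurableSet S → MeasurableSet T →
      ∫⁻ x in S, ν.withDensity (q x) T ∂(ν.withDensity p) =
        ∫⁻ x in S, ∫⁻ y in T, p x * q x y ∂ν ∂ν := fun {S T} hS hT => by
    simp_rw [withDensity_apply _ hT]
    have hg : Measurable fun x => ∫⁻ y in T, q x y ∂ν := hq.lintegral_prod_right'
    rw [setLIntegral_withDensity_eq_setLIntegral_mul _ hp hg hS]
    exact setLIntegral_congr_fun hS fun x _ =>
      (lintegral_const_mul _ (hq.comp measurable_prodMk_left)).symm
  have hF : Measurable fun z : α × α => p z.1 * q z.1 z.2 := (hp.comp measurable_fst).mul hq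
  rw [hflow hA hB, hflow hB hA, lintegral_lintegral_swap hF.aemeasurable]
  refine lintegral_congr_ae (ae_restrict_of_ae ?_)
  filter_upwards [hbal] with y hy
  exact lintegral_congr_ae (ae_restrict_of_ae (hy.mono fun x hx => hx.symm))

theorem map_add_prod_withDensity {β G : Type*} [MeasurableSpace β] [AddCommGroup G]
    [MeasurableSpace G] [MeasurableAdd₂ G] [MeasurableSub₂ G] (ν : Measure β) [SFinite ν]
    (m : Measure G) [SFinite m] [m.IsAddLeftInvariant] {f : β → G} (hf : Measurable f)
    {g : G → ℝ≥0∞} (hg : Measurable g) :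
    (ν.prod (m.withDensity g)).map (fun p => f p.1 + p.2) =
      m.withDensity fun y => ∫⁻ t, g (y - f t) ∂ν := by
  have hmap : Measurable fun p : β × G => f p.1 + p.2 := (hf.comp measurable_fst).add measurable_snd
  ext B hB
  have hslice : ∀ t, m.withDensity g ((f t + ·) ⁻¹' B) = ∫⁻ y in B, g (y - f t) ∂m := by
    intro t
    rw [withDensity_apply _ (measurable_const_add (f t) hB),
      ← lintegral_indicator (measurable_const_add _ hB), ← lintegral_indicator hB,
      ← lintegral_add_left_eq_self (B.indicator fun y => g (y - f t)) (f t)]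
    congr with c
    by_cases hc : f t + c ∈ B
    · rw [Set.indicator_of_mem hc, Set.indicator_of_mem (show c ∈ (f t + ·) ⁻¹' B from hc),
        add_sub_cancel_left]
    · rw [Set.indicator_of_notMem hc, Set.indicator_of_notMem (show c ∉ (f t + ·) ⁻¹' B from hc)]
  rw [Measure.map_apply hmap hB, Measure.prod_apply (hmap hB), withDensity_apply _ hB]
  calc ∫⁻ t, m.withDensity g ((f t + ·) ⁻¹' B) ∂ν = ∫⁻ t, ∫⁻ y in B, g (y - f t) ∂m ∂ν :=
        lintegral_congr hslice
    _ = ∫⁻ y in B, ∫⁻ t, g (y - f t) ∂ν ∂m :=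
        lintegral_lintegral_swap
          (hg.comp (measurable_snd.sub (hf.comp measurable_fst))).aemeasurable

theorem lintegral_comp_div_right {f : ℝ → ℝ≥0∞} (hf : Measurable f) {x : ℝ} (hx : 0 < x) :
    ∫⁻ u, f (u / x) = ENNReal.ofReal x * ∫⁻ t, f t := by
  simp_rw [div_eq_inv_mul]
  rw [← lintegral_map hf (measurable_const_mul _), Real.map_volume_mul_left (inv_ne_zero hx.ne'),
    lintegral_smul_measure, inv_inv, abs_of_pos hx, smul_eq_mul]

@[fun_prop]
theorem measurable_gammaPDF (a r : ℝ) : Measurable (gammaPDF a r) :=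
  (measurable_gammaPDFReal a r).ennreal_ofReal

@[fun_prop]
theorem measurable_betaPDF (a b : ℝ) : Measurable (betaPDF a b) :=
  (measurable_betaPDFReal a b).ennreal_ofReal

instance (a b : ℝ) : SFinite (betaMeasure a b) := by
  rw [betaMeasure]
  infer_instance

theorem betaMeasure'_eq_betaMeasure (a b : ℝ) : betaMeasure' a b = betaMeasure a b := by
  refine congrArg volume.withDensity (funext fun x => congrArg ENNReal.ofReal ?_)
  simp only [betaPDFReal, beta, Set.indicator_apply, Set.mem_Ioo]
  split_ifs <;> ring

/-- Density form of the beta–gamma algebra: if `X ∼ Γ(a + b)` and `B ∼ Beta(a, b)` are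
independent, then `B X ∼ Γ(a)` and `(1 - B) X ∼ Γ(b)` are independent. -/
theorem gammaPDF_mul_betaPDF_div {a b x u : ℝ} (ha : 0 < a) (hb : 0 < b) (hx : 0 < x)
    (hu : u ≠ 0) (hux : u ≠ x) :
    gammaPDF (a + b) 1 x * betaPDF a b (u / x) =
      ENNReal.ofReal x * (gammaPDF a 1 u * gammaPDF b 1 (x - u)) := by
  rcases hu.lt_or_gt with hu | hu
  · rw [betaPDF_eq_zero_of_nonpos (div_nonpos_of_nonpos_of_nonneg hu.le hx.le),
      gammaPDF_of_neg hu, mul_zero, zero_mul, mul_zero]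
  rcases hux.lt_or_gt with hux | hux
  swap
  · rw [betaPDF_eq_zero_of_one_le ((one_le_div hx).2 hux.le), gammaPDF_of_neg (sub_neg.2 hux),
      mul_zero, mul_zero, mul_zero]
  have hxu : 0 < x - u := sub_pos.2 hux
  have hΓa := Gamma_pos_of_pos ha
  have hΓb := Gamma_pos_of_pos hb
  have hΓab := Gamma_pos_of_pos (add_pos ha hb)
  rw [gammaPDF_of_nonneg hx.le, betaPDF_of_pos_lt_one (div_pos hu hx) ((div_lt_one hx).2 hux),
    gammaPDF_of_nonneg hu.le, gammaPDF_of_nonneg hxu.le, ← ENNReal.ofReal_mul (by positivity),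
    ← ENNReal.ofReal_mul (by positivity), ← ENNReal.ofReal_mul hx.le]
  congr 1
  have hexp : exp (-(1 * x)) = exp (-(1 * u)) * exp (-(1 * (x - u))) := by
    rw [← exp_add]; ring_nf
  rw [one_sub_div hx.ne', div_rpow hu.le hx.le, div_rpow hxu.le hx.le, beta, hexp,
    show a + b - 1 = (a - 1) + (b - 1) + 1 by ring, rpow_add hx, rpow_add hx, rpow_one]
  simp only [one_rpow]
  field_simp

theorem gammaPDF_mul_lintegral_betaMeasure {a b x : ℝ} (ha : 0 < a) (hb : 0 < b) (hx : x ≠ 0)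
    (y : ℝ) :
    gammaPDF (a + b) 1 x * ∫⁻ t, gammaPDF b 1 (y - t * x) ∂betaMeasure a b =
      ∫⁻ u, gammaPDF a 1 u * gammaPDF b 1 (x - u) * gammaPDF b 1 (y - u) := by
  rcases hx.lt_or_gt with hx | hx
  · rw [gammaPDF_of_neg hx, zero_mul, eq_comm]
    refine (lintegral_congr fun u => ?_).trans lintegral_zero
    rcases lt_or_ge u 0 with hu | hu
    · rw [gammaPDF_of_neg hu, zero_mul, zero_mul]
    · rw [gammaPDF_of_neg (by linarith : x - u < 0), mul_zero, zero_mul]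
  rw [← ENNReal.mul_right_inj (ENNReal.ofReal_pos.2 hx).ne' ENNReal.ofReal_ne_top]
  calc ENNReal.ofReal x * (gammaPDF (a + b) 1 x * ∫⁻ t, gammaPDF b 1 (y - t * x) ∂betaMeasure a b)
      = ∫⁻ u, gammaPDF (a + b) 1 x * betaPDF a b (u / x) * gammaPDF b 1 (y - u) := by
        rw [betaMeasure, lintegral_withDensity_eq_lintegral_mul _ (by fun_prop)
          (g := fun t => gammaPDF b 1 (y - t * x)) (by fun_prop), mul_left_comm,
          ← lintegral_comp_div_right (by fun_prop) hx, ← lintegral_const_mul _ (by fun_prop)]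
        refine lintegral_congr fun u => ?_
        simp only [Pi.mul_apply, div_mul_cancel₀ u hx.ne', mul_assoc]
    _ = ∫⁻ u, ENNReal.ofReal x *
          (gammaPDF a 1 u * gammaPDF b 1 (x - u) * gammaPDF b 1 (y - u)) := by
        refine lintegral_congr_ae ?_
        filter_upwards [Measure.ae_ne volume 0, Measure.ae_ne volume x] with u hu hux
        rw [gammaPDF_mul_betaPDF_div ha hb hx hu hux, mul_assoc, mul_assoc]
    _ = ENNReal.ofReal x * ∫⁻ u, gammaPDF a 1 u * gammaPDF b 1 (x - u) * gammaPDF b 1 (y - u) :=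
        lintegral_const_mul _ (by fun_prop)

theorem ae_gammaPDF_mul_lintegral_betaMeasure_symm {a b : ℝ} (ha : 0 < a) (hb : 0 < b) :
    ∀ᵐ x, ∀ᵐ y, gammaPDF (a + b) 1 x * ∫⁻ t, gammaPDF b 1 (y - t * x) ∂betaMeasure a b =
      gammaPDF (a + b) 1 y * ∫⁻ t, gammaPDF b 1 (x - t * y) ∂betaMeasure a b := by
  filter_upwards [Measure.ae_ne volume 0] with x hx
  filter_upwards [Measure.ae_ne volume 0] with y hy
  rw [gammaPDF_mul_lintegral_betaMeasure ha hb hx, gammaPDF_mul_lintegral_betaMeasure ha hb hy]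
  simp only [mul_right_comm]

/-- The Beta-Gamma kernel `Q(x,·)`, the law of `b·x + c` with
`b ∼ Beta(kρ, k(1−ρ))` and `c ∼ Gamma(k(1−ρ), 1)` independent, is reversible
with respect to `Gamma(k, 1)`. -/
theorem stmt3 (k ρ : ℝ) (hk : 0 < k) (hρ : ρ ∈ Set.Ioo (0 : ℝ) 1)
    (Q : ℝ → Measure ℝ)
    (hQ : Q = fun x =>
      ((betaMeasure' (k * ρ) (k * (1 - ρ))).prod
        (gammaMeasure (k * (1 - ρ)) 1)).map fun p => p.1 * x + p.2)
    (μ : Measure ℝ) (hμ : μ = gammaMeasure k 1) :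
    ∀ A B : Set ℝ, MeasurableSet A → MeasurableSet B →
      ∫⁻ x in A, Q x B ∂μ = ∫⁻ x in B, Q x A ∂μ := by
  intro A B hA hB
  have ha : 0 < k * ρ := mul_pos hk hρ.1
  have hb : 0 < k * (1 - ρ) := mul_pos hk (sub_pos.2 hρ.2)
  have hQ_density : Q = fun x => volume.withDensity fun y =>
      ∫⁻ t, gammaPDF (k * (1 - ρ)) 1 (y - t * x) ∂betaMeasure (k * ρ) (k * (1 - ρ)) := by
    rw [hQ, betaMeasure'_eq_betaMeasure]
    funext x
    exact map_add_prod_withDensity _ _ (f := fun t => t * x) (by fun_prop) (by fun_prop)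
  have hμ_density : μ = volume.withDensity (gammaPDF (k * ρ + k * (1 - ρ)) 1) := by
    rw [hμ, gammaMeasure]
    ring_nf
  rw [hQ_density, hμ_density]
  refine setLIntegral_withDensity_eq_of_detailed_balance (by fun_prop) ?_
    (ae_gammaPDF_mul_lintegral_betaMeasure_symm ha hb) hA hB
  exact Measurable.lintegral_prod_right'
    (f := fun z : (ℝ × ℝ) × ℝ => gammaPDF (k * (1 - ρ)) 1 (z.1.2 - z.2 * z.1.1)) (by fun_prop)
end
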